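/- For every vertex v of a finite graph G and every r ∈ ℕ, the spectral radius of the ball G(v,r) is at least the spectral radius of the unraveled ball G̃(v,r): λ_1(G(v,r)) ≥ λ_1(G̃(v,r)). -/

import Mathlib

open Classical Real Filter SimpleGraph

/-- The multiset of adjacency eigenvalues of a finite simple graph, indexed by vertices. -/
noncomputable def adjEigs {V : Type*} [Fintype V] (G : SimpleGraph V) : V → ℝ :=
  Matrix.IsHermitian.eigenvalues (A := G.adjMatrix ℝ)
    (by rw [Matrix.IsHermitian, Matrix.conjTranspose_eq_transpose_of_trivial]
        exact SimpleGraph.isSymm_adjMatrix G)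

/-- The spectral radius (largest adjacency eigenvalue) of a finite simple graph. -/
noncomputable def lam1 {V : Type*} [Fintype V] (G : SimpleGraph V) : ℝ := ⨆ v, adjEigs G v

/-- The second largest adjacency eigenvalue (with multiplicity) of a finite simple graph. -/
noncomputable def lam2 {V : Type*} [Fintype V] (G : SimpleGraph V) : ℝ :=
  ⨆ p : {p : V × V // p.1 ≠ p.2}, min (adjEigs G p.1.1) (adjEigs G p.1.2)

/-- A non-backtracking walk of length `≤ r` starting at `v`: recorded as its list of
vertices (of length `≤ r + 1`, starting with `v`). -/
structure NBWalk {V : Type*} (G : SimpleGraph V) (v : V) (r : ℕ) where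
  toList : List V
  ne_nil : toList ≠ []
  head_eq : toList.head ne_nil = v
  length_le : toList.length ≤ r + 1
  chain : toList.Chain' G.Adj
  nonback : ∀ i : ℕ, ∀ h : i + 2 < toList.length,
    toList.get ⟨i, by omega⟩ ≠ toList.get ⟨i + 2, h⟩

/-- The unraveled ball of radius `r` centered at `v`: vertices are the non-backtracking
walks of length `≤ r` starting at `v`, two walks adjacent iff one is a one-step
extension of the other. -/
def unravBall {V : Type*} (G : SimpleGraph V) (v : V) (r : ℕ) : SimpleGraph (NBWalk G v r) :=
  SimpleGraph.fromRel (fun w w' => ∃ x, w'.toList = w.toList ++ [x])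

noncomputable instance {V : Type*} [Fintype V] {G : SimpleGraph V} {v : V} {r : ℕ} :
    Fintype (NBWalk G v r) :=
  haveI : Finite {l : List V // l.length ≤ r + 1} :=
    (List.finite_length_le V (r + 1)).to_subtype
  haveI : Finite (NBWalk G v r) := Finite.of_injective
    (fun w => (⟨w.toList, w.length_le⟩ : {l : List V // l.length ≤ r + 1}))
    (by rintro ⟨⟩ ⟨⟩ h; simp_all)
  Fintype.ofFinite _

/-- The root of the unraveled ball: the length-`0` walk `(v)`. -/
def nbRoot {V : Type*} (G : SimpleGraph V) (v : V) (r : ℕ) : NBWalk G v r :=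
  ⟨[v], by simp, rfl, by simp, List.isChain_singleton _, by intro i h; simp at h⟩

/-- The terminal vertex of a non-backtracking walk. -/
def NBWalk.term {V : Type*} {G : SimpleGraph V} {v : V} {r : ℕ} (w : NBWalk G v r) : V :=
  w.toList.getLast w.ne_nil

/-!
The terminal-vertex map sends the unraveled ball `G̃(v, r)` to the ball `G(v, r)` by a graph
homomorphism which, by the non-backtracking condition, is injective on every neighbourhood.
For any such locally injective homomorphism `φ : H →g G`, push a top eigenvector `x` of `H`
forward to `y b = ‖x|φ⁻¹(b)‖₂`. Then `‖y‖ = ‖x‖`, and the `H`-edges over a fixed pair of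
vertices of `G` form a partial matching between two fibres, so Cauchy–Schwarz on them gives
`⟨x, A_H x⟩ ≤ ⟨y, A_G y⟩`. The Rayleigh quotient bound then yields `λ₁(H) ≤ λ₁(G)`.
-/

open Matrix Finset

namespace Matrix.IsHermitian

variable {n : Type*} [Fintype n] [DecidableEq n] {A : Matrix n n ℝ}

open scoped MatrixOrder in
theorem dotProduct_mulVec_le_iSup_eigenvalues_mul (hA : A.IsHermitian) (x : n → ℝ) :
    x ⬝ᵥ A *ᵥ x ≤ (⨆ i, hA.eigenvalues i) * (x ⬝ᵥ x) := by
  have hle : A ≤ algebraMap ℝ (Matrix n n ℝ) (⨆ i, hA.eigenvalues i) := by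
    refine le_algebraMap_of_spectrum_le fun μ hμ => ?_
    obtain ⟨i, rfl⟩ := hA.spectrum_real_eq_range_eigenvalues ▸ hμ
    exact le_ciSup (Set.finite_range _).bddAbove i
  simpa [sub_mulVec, Algebra.algebraMap_eq_smul_one, dotProduct_sub, smul_mulVec] using
    (le_iff.mp hle).dotProduct_mulVec_nonneg x

theorem exists_mulVec_eq_iSup_eigenvalues_smul [Nonempty n] (hA : A.IsHermitian) :
    ∃ x : n → ℝ, x ≠ 0 ∧ A *ᵥ x = (⨆ i, hA.eigenvalues i) • x := by
  obtain ⟨i₀, hi₀⟩ := Finite.exists_max hA.eigenvalues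
  rw [le_antisymm (ciSup_le hi₀) (le_ciSup (Set.finite_range _).bddAbove i₀)]
  refine ⟨_, ?_, hA.mulVec_eigenvectorBasis i₀⟩
  simpa using hA.eigenvectorBasis.orthonormal.ne_zero i₀

end Matrix.IsHermitian

theorem Finset.sum_comp_le_sum_of_injOn {ι κ : Type*} {s : Finset ι} {t : Finset κ} {e : ι → κ}
    (he : Set.InjOn e s) (hst : Set.MapsTo e s t) {f : κ → ℝ} (hf : ∀ j ∈ t, 0 ≤ f j) :
    ∑ i ∈ s, f (e i) ≤ ∑ j ∈ t, f j := by
  rw [← sum_image he]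
  exact sum_le_sum_of_subset_of_nonneg (image_subset_iff.mpr fun _ hi => hst hi)
    fun j hj _ => hf j hj

theorem Real.sum_mul_le_sqrt_mul_sqrt_of_injOn {α β : Type*} {P : Finset (α × β)}
    {s : Finset α} {t : Finset β} (hs : Set.MapsTo Prod.fst (P : Set (α × β)) s)
    (ht : Set.MapsTo Prod.snd (P : Set (α × β)) t) (hinj₁ : Set.InjOn Prod.fst (P : Set (α × β)))
    (hinj₂ : Set.InjOn Prod.snd (P : Set (α × β))) (f : α → ℝ) (g : β → ℝ) :
    ∑ p ∈ P, f p.1 * g p.2 ≤ √(∑ i ∈ s, f i ^ 2) * √(∑ j ∈ t, g j ^ 2) :=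
  (Real.sum_mul_le_sqrt_mul_sqrt P _ _).trans <| mul_le_mul
    (Real.sqrt_le_sqrt (sum_comp_le_sum_of_injOn hinj₁ hs fun _ _ => sq_nonneg _))
    (Real.sqrt_le_sqrt (sum_comp_le_sum_of_injOn hinj₂ ht fun _ _ => sq_nonneg _))
    (Real.sqrt_nonneg _) (Real.sqrt_nonneg _)

section lam1

variable {V : Type*} [Fintype V]

theorem dotProduct_adjMatrix_mulVec_le_lam1_mul (G : SimpleGraph V) (x : V → ℝ) :
    x ⬝ᵥ G.adjMatrix ℝ *ᵥ x ≤ lam1 G * (x ⬝ᵥ x) :=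
  (G.isHermitian_adjMatrix ℝ).dotProduct_mulVec_le_iSup_eigenvalues_mul x

theorem exists_adjMatrix_mulVec_eq_lam1_smul [Nonempty V] (G : SimpleGraph V) :
    ∃ x : V → ℝ, x ≠ 0 ∧ G.adjMatrix ℝ *ᵥ x = lam1 G • x :=
  (G.isHermitian_adjMatrix ℝ).exists_mulVec_eq_iSup_eigenvalues_smul

theorem dotProduct_adjMatrix_mulVec_eq_sum_adj (G : SimpleGraph V) (x : V → ℝ) :
    x ⬝ᵥ G.adjMatrix ℝ *ᵥ x = ∑ p : V × V with G.Adj p.1 p.2, x p.1 * x p.2 := by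
  rw [G.dotProduct_mulVec_adjMatrix, sum_filter, ← univ_product_univ, sum_product]

end lam1

section fiberNorm

variable {α β : Type*} [Fintype α]

noncomputable def fiberNorm (φ : α → β) (x : α → ℝ) (b : β) : ℝ :=
  √(∑ a with φ a = b, x a ^ 2)

theorem fiberNorm_dotProduct_self [Fintype β] (φ : α → β) (x : α → ℝ) :
    fiberNorm φ x ⬝ᵥ fiberNorm φ x = x ⬝ᵥ x := by
  simp only [dotProduct, fiberNorm, Real.mul_self_sqrt (sum_nonneg fun _ _ => sq_nonneg _)]
  rw [Finset.sum_fiberwise univ φ]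
  simp only [sq]

end fiberNorm

section LocallyInjective

variable {W U : Type*} [Fintype W] {H : SimpleGraph W} {G : SimpleGraph U}

theorem sum_adj_fiber_le_fiberNorm_mul {φ : W → U} (hφ : ∀ w, Set.InjOn φ (H.neighborSet w))
    (x : W → ℝ) (q : U × U) :
    ∑ p : W × W with H.Adj p.1 p.2 ∧ Prod.map φ φ p = q, x p.1 * x p.2 ≤
      fiberNorm φ x q.1 * fiberNorm φ x q.2 := by
  have mem_iff (p : W × W) : p ∈ ({p : W × W | H.Adj p.1 p.2 ∧ Prod.map φ φ p = q} : Finset _) ↔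
      H.Adj p.1 p.2 ∧ φ p.1 = q.1 ∧ φ p.2 = q.2 := by
    simp [Prod.ext_iff]
  refine Real.sum_mul_le_sqrt_mul_sqrt_of_injOn ?_ ?_ ?_ ?_ x x
  · intro p hp
    simpa using ((mem_iff p).mp hp).2.1
  · intro p hp
    simpa using ((mem_iff p).mp hp).2.2
  · rintro ⟨a, b⟩ hp ⟨a', b'⟩ hp' (rfl : a = a')
    obtain ⟨hab, -, hb⟩ := (mem_iff _).mp hp
    obtain ⟨hab', -, hb'⟩ := (mem_iff _).mp hp'
    exact Prod.ext rfl (hφ a hab hab' (hb.trans hb'.symm))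
  · rintro ⟨a, b⟩ hp ⟨a', b'⟩ hp' (rfl : b = b')
    obtain ⟨hab, ha, -⟩ := (mem_iff _).mp hp
    obtain ⟨hab', ha', -⟩ := (mem_iff _).mp hp'
    exact Prod.ext (hφ b hab.symm hab'.symm (ha.trans ha'.symm)) rfl

theorem lam1_le_lam1_of_injOn_neighborSet [Nonempty W] [Fintype U] (φ : H →g G)
    (hφ : ∀ w, Set.InjOn φ (H.neighborSet w)) : lam1 H ≤ lam1 G := by
  obtain ⟨x, hx0, hx⟩ := exists_adjMatrix_mulVec_eq_lam1_smul H
  have hquad : x ⬝ᵥ H.adjMatrix ℝ *ᵥ x ≤ fiberNorm φ x ⬝ᵥ G.adjMatrix ℝ *ᵥ fiberNorm φ x := by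
    have hmaps (p) (hp : p ∈ ({p : W × W | H.Adj p.1 p.2} : Finset _)) :
        Prod.map φ φ p ∈ ({q : U × U | G.Adj q.1 q.2} : Finset _) := by
      simpa using φ.map_adj (mem_filter.mp hp).2
    rw [dotProduct_adjMatrix_mulVec_eq_sum_adj, dotProduct_adjMatrix_mulVec_eq_sum_adj,
      ← sum_fiberwise_of_maps_to hmaps]
    refine sum_le_sum fun q _ => ?_
    rw [filter_filter]
    exact sum_adj_fiber_le_fiberNorm_mul hφ x q
  have hpos : 0 < x ⬝ᵥ x := by simpa using dotProduct_star_self_pos_iff.mpr hx0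
  refine le_of_mul_le_mul_right ?_ hpos
  calc lam1 H * (x ⬝ᵥ x) = x ⬝ᵥ H.adjMatrix ℝ *ᵥ x := by rw [hx, dotProduct_smul, smul_eq_mul]
    _ ≤ fiberNorm φ x ⬝ᵥ G.adjMatrix ℝ *ᵥ fiberNorm φ x := hquad
    _ ≤ lam1 G * (fiberNorm φ x ⬝ᵥ fiberNorm φ x) := dotProduct_adjMatrix_mulVec_le_lam1_mul G _
    _ = lam1 G * (x ⬝ᵥ x) := by rw [fiberNorm_dotProduct_self]

end LocallyInjective

namespace NBWalk

variable {V : Type*} {G : SimpleGraph V} {v : V} {r : ℕ}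

theorem ext_toList {w w' : NBWalk G v r} (h : w.toList = w'.toList) : w = w' := by
  cases w; cases w'; cases h; rfl

theorem term_eq_of_toList_eq_append {w w' : NBWalk G v r} {x : V}
    (h : w'.toList = w.toList ++ [x]) : w'.term = x := by
  simp [term, h]

theorem adj_term_of_toList_eq_append {w w' : NBWalk G v r} {x : V}
    (h : w'.toList = w.toList ++ [x]) : G.Adj w.term w'.term := by
  have hchain := w'.chain
  rw [h] at hchain
  rw [term_eq_of_toList_eq_append h]
  exact (List.isChain_append.mp hchain).2.2 w.term
    (List.getLast?_eq_some_getLast w.ne_nil) x rfl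

theorem term_ne_of_toList_eq_append_append {w₀ w₁ w₂ : NBWalk G v r} {x y : V}
    (h₁ : w₁.toList = w₀.toList ++ [x]) (h₂ : w₂.toList = w₁.toList ++ [y]) :
    w₂.term ≠ w₀.term := by
  rw [term_eq_of_toList_eq_append h₂]
  intro hy
  have hw₂ : w₂.toList = w₀.toList.dropLast ++ [w₀.term, x, y] := by
    rw [h₂, h₁, ← List.dropLast_append_getLast w₀.ne_nil]
    simp [term]
  apply w₂.nonback w₀.toList.dropLast.length (by simp [hw₂])
  simp [hw₂, hy, List.getElem_append_right]

theorem term_mem_ball (w : NBWalk G v r) :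
    w.term ∈ {u | G.Reachable v u ∧ G.dist v u ≤ r} := by
  have hchain : w.toList.IsChain G.Adj := w.chain
  let p := (Walk.ofSupport w.toList w.ne_nil hchain).copy w.head_eq rfl
  refine ⟨⟨p⟩, (dist_le p).trans ?_⟩
  rw [Walk.length_copy, Walk.length_ofSupport]
  have := w.length_le
  omega

end NBWalk

section unravBall

variable {V : Type*} {G : SimpleGraph V} {v : V} {r : ℕ}

theorem unravBall_adj_iff {w w' : NBWalk G v r} :
    (unravBall G v r).Adj w w' ↔
      (∃ x, w'.toList = w.toList ++ [x]) ∨ ∃ x, w.toList = w'.toList ++ [x] := by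
  refine ⟨fun h => h.2, fun h => ⟨?_, h⟩⟩
  rintro rfl
  rcases h with ⟨x, hx⟩ | ⟨x, hx⟩ <;> simpa using congrArg List.length hx

theorem unravBall_adj_term {w w' : NBWalk G v r} (h : (unravBall G v r).Adj w w') :
    G.Adj w.term w'.term := by
  rcases unravBall_adj_iff.mp h with ⟨x, hx⟩ | ⟨x, hx⟩
  · exact NBWalk.adj_term_of_toList_eq_append hx
  · exact (NBWalk.adj_term_of_toList_eq_append hx).symm

theorem injOn_term_neighborSet_unravBall (w : NBWalk G v r) :
    Set.InjOn NBWalk.term ((unravBall G v r).neighborSet w) := by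
  intro w₁ h₁ w₂ h₂ ht
  rcases unravBall_adj_iff.mp h₁ with ⟨x₁, e₁⟩ | ⟨x₁, e₁⟩ <;>
    rcases unravBall_adj_iff.mp h₂ with ⟨x₂, e₂⟩ | ⟨x₂, e₂⟩
  · apply NBWalk.ext_toList
    rw [e₁, e₂, ← NBWalk.term_eq_of_toList_eq_append e₁,
      ← NBWalk.term_eq_of_toList_eq_append e₂, ht]
  · exact absurd ht (NBWalk.term_ne_of_toList_eq_append_append e₂ e₁)
  · exact absurd ht.symm (NBWalk.term_ne_of_toList_eq_append_append e₁ e₂)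
  · exact NBWalk.ext_toList (List.append_inj_left' (e₁.symm.trans e₂) rfl)

variable (G v r) in
def unravBallTermHom : unravBall G v r →g G.induce {u | G.Reachable v u ∧ G.dist v u ≤ r} where
  toFun w := ⟨w.term, w.term_mem_ball⟩
  map_rel' := unravBall_adj_term

end unravBall

/-- The spectral radius of the ball `G(v, r)` is at least the spectral radius of the
unraveled ball `G̃(v, r)`. -/
theorem lam1_ball_ge_lam1_unravBall {V : Type*} [Fintype V] (G : SimpleGraph V)
    (v : V) (r : ℕ) :
    lam1 (unravBall G v r) ≤ lam1 (G.induce {u | G.Reachable v u ∧ G.dist v u ≤ r}) := by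
  have : Nonempty (NBWalk G v r) := ⟨nbRoot G v r⟩
  refine lam1_le_lam1_of_injOn_neighborSet (unravBallTermHom G v r) fun w w₁ h₁ w₂ h₂ ht => ?_
  exact injOn_term_neighborSet_unravBall w h₁ h₂ (congrArg Subtype.val ht)
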